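/- Let L : L²([0,1]) → L²([0,1]) be a compact, integral-preserving bounded linear operator satisfying the mixing condition (A1). Then Id − L restricted to V is a bijection of V onto V with bounded inverse: for every g ∈ V there exists a unique h ∈ V with h − L h = g, and there exists M ≥ 0 such that ‖h‖₂ ≤ M ‖g‖₂ for every such pair (g, h). -/

import Mathlib

/-!
On the closed invariant subspace `V` of zero-mean functions the restriction `T` of `L` is compact
and `Tⁿ x → 0` for every `x`. Hence `1` is not an eigenvalue of `T` (a fixed vector has a constant
orbit), so by the Fredholm alternative for compact operators `1 - T` is invertible on `V`; its
inverse is the bounded solution operator.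
-/

open MeasureTheory

/-- Lebesgue measure restricted to the unit interval `[0,1]`. -/
noncomputable def μ01 : Measure ℝ := volume.restrict (Set.Icc (0 : ℝ) 1)

open Filter Topology

namespace IsCompactOperator

variable {𝕜 X : Type*} [NontriviallyNormedField 𝕜] [NormedAddCommGroup X] [NormedSpace 𝕜 X]
  [CompleteSpace X] {T : X →L[𝕜] X}

theorem isUnit_one_sub_of_tendsto_pow_apply (hT : IsCompactOperator T)
    (hT0 : ∀ x, Tendsto (fun n ↦ (T ^ n) x) atTop (𝓝 0)) : IsUnit (1 - T) := by
  have hfix : ¬ Module.End.HasEigenvalue (T : Module.End 𝕜 X) 1 := by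
    intro hev
    obtain ⟨x, hx⟩ := hev.exists_hasEigenvector
    have hpow (n : ℕ) : (T ^ n) x = x := by
      rw [FunLike.coe_pow_eq_iterate]
      exact Function.iterate_fixed (by simpa using hx.apply_eq_smul) n
    exact hx.2 (tendsto_nhds_unique tendsto_const_nhds (by simpa only [hpow] using hT0 x))
  simpa [spectrum.mem_resolventSet_iff] using
    (hT.hasEigenvalue_or_mem_resolventSet one_ne_zero).resolve_left hfix

end IsCompactOperator

namespace ContinuousLinearMap

variable {𝕜 X : Type*} [NontriviallyNormedField 𝕜] [NormedAddCommGroup X] [NormedSpace 𝕜 X]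
  {L : X →L[𝕜] X} {V : Submodule 𝕜 X}

theorem coe_pow_restrict_apply (hLV : ∀ x ∈ V, L x ∈ V) (n : ℕ) (x : V) :
    ((L.restrict hLV ^ n) x : X) = (L ^ n) x := by
  induction n with
  | zero => rfl
  | succ n ih =>
    rw [pow_succ', mul_apply_eq_comp, coe_restrict_apply, ih, pow_succ', mul_apply_eq_comp]

theorem isUnit_one_sub_restrict [CompleteSpace X] (hL : IsCompactOperator L)
    (hV : IsClosed (V : Set X)) (hLV : ∀ x ∈ V, L x ∈ V)
    (hmix : ∀ x ∈ V, Tendsto (fun n ↦ ‖(L ^ n) x‖) atTop (𝓝 0)) :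
    IsUnit (1 - L.restrict hLV) := by
  have : CompleteSpace V := hV.completeSpace_coe
  refine IsCompactOperator.isUnit_one_sub_of_tendsto_pow_apply (hL.restrict hLV hV) fun x ↦ ?_
  rw [tendsto_zero_iff_norm_tendsto_zero]
  simpa only [Submodule.coe_norm, coe_pow_restrict_apply] using hmix x x.2

theorem existsUnique_sub_apply_eq_and_norm_le {hLV : ∀ x ∈ V, L x ∈ V}
    (hu : IsUnit (1 - L.restrict hLV)) :
    (∀ g ∈ V, ∃! h, h ∈ V ∧ h - L h = g) ∧
      ∃ M, 0 ≤ M ∧ ∀ g h, g ∈ V → h ∈ V → h - L h = g → ‖h‖ ≤ M * ‖g‖ := by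
  obtain ⟨u, hu⟩ := hu
  set e := ContinuousLinearEquiv.ofUnit u
  have solve (h g : V) : (h : X) - L h = g ↔ h = e.symm g := by
    rw [e.eq_symm_apply, Subtype.ext_iff]
    change _ ↔ ((u : V →L[𝕜] V) h : X) = g
    rw [hu]
    rfl
  refine ⟨fun g hg ↦ ?_, ‖(e.symm : V →L[𝕜] V)‖, norm_nonneg _, fun g h hg hh hgh ↦ ?_⟩
  · exact ⟨e.symm ⟨g, hg⟩, ⟨(e.symm _).2, (solve _ ⟨g, hg⟩).2 rfl⟩,
      fun h ⟨hh, hgh⟩ ↦ congrArg Subtype.val ((solve ⟨h, hh⟩ ⟨g, hg⟩).1 hgh)⟩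
  · calc ‖h‖ = ‖e.symm ⟨g, hg⟩‖ := by rw [← (solve ⟨h, hh⟩ ⟨g, hg⟩).1 hgh]; rfl
      _ ≤ ‖(e.symm : V →L[𝕜] V)‖ * ‖g‖ := (e.symm : V →L[𝕜] V).le_opNorm _

end ContinuousLinearMap

namespace MeasureTheory

variable {α : Type*} [MeasurableSpace α] (μ : Measure α) [IsFiniteMeasure μ]

/-- `∫ f dμ = ⟪1, f⟫`, so the zero-mean functions form the orthogonal complement of the
constants. -/
noncomputable def zeroMeanSubspace : Submodule ℝ (Lp ℝ 2 μ) :=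
  (ℝ ∙ indicatorConstLp 2 MeasurableSet.univ (measure_ne_top μ _) (1 : ℝ))ᗮ

theorem isClosed_zeroMeanSubspace : IsClosed (zeroMeanSubspace μ : Set (Lp ℝ 2 μ)) :=
  Submodule.isClosed_orthogonal _

variable {μ}

theorem mem_zeroMeanSubspace_iff {f : Lp ℝ 2 μ} : f ∈ zeroMeanSubspace μ ↔ ∫ x, f x ∂μ = 0 := by
  rw [zeroMeanSubspace, Submodule.mem_orthogonal_singleton_iff_inner_right,
    L2.inner_indicatorConstLp_one, Measure.restrict_univ]

end MeasureTheory

instance : IsFiniteMeasure μ01 := ⟨by simp [μ01]⟩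

theorem resolvent_bijective_bounded_on_zero_mean
    (L : Lp ℝ 2 μ01 →L[ℝ] Lp ℝ 2 μ01)
    (hcomp : IsCompactOperator L)
    (hint : ∀ g : Lp ℝ 2 μ01, ∫ x, (L g) x ∂μ01 = ∫ x, g x ∂μ01)
    (hmix : ∀ g : Lp ℝ 2 μ01, (∫ x, g x ∂μ01) = 0 →
      Filter.Tendsto (fun n : ℕ => ‖(L ^ n) g‖) Filter.atTop (nhds 0)) :
    (∀ g : Lp ℝ 2 μ01, (∫ x, g x ∂μ01) = 0 →
      ∃! h : Lp ℝ 2 μ01, (∫ x, h x ∂μ01) = 0 ∧ h - L h = g) ∧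
    (∃ M : ℝ, 0 ≤ M ∧ ∀ g h : Lp ℝ 2 μ01,
      (∫ x, g x ∂μ01) = 0 → (∫ x, h x ∂μ01) = 0 → h - L h = g →
        ‖h‖ ≤ M * ‖g‖) := by
  have hLV : ∀ g ∈ zeroMeanSubspace μ01, L g ∈ zeroMeanSubspace μ01 := fun g hg ↦
    mem_zeroMeanSubspace_iff.2 ((hint g).trans (mem_zeroMeanSubspace_iff.1 hg))
  have hu := L.isUnit_one_sub_restrict hcomp (isClosed_zeroMeanSubspace μ01) hLV
    fun g hg ↦ hmix g (mem_zeroMeanSubspace_iff.1 hg)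
  simpa only [mem_zeroMeanSubspace_iff] using
    ContinuousLinearMap.existsUnique_sub_apply_eq_and_norm_le hu
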